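/- Let n and r be integers with r ≥ 2 and n/2 < 4r < n, and let G be the circulant graph C_n(1,…,r) on vertex set ZMod n. If D is a set of edges of G with |D| ≤ 2r such that the spanning subgraph with edge set E(G) \ D is disconnected, then D is exactly the set of 2r edges incident with some single vertex. In particular, for every subset U ⊆ ZMod n with 2 ≤ |U| ≤ n − 2, the number of edges of G with exactly one endpoint in U is strictly greater than 2r. -/

import Mathlib

/-!
For `U ⊆ ZMod n` let `exitCount U c` count the `i ∈ U` with `i + c ∉ U`. The edges `s(i, i ± k)`
leaving `U` are pairwise distinct, so the cut of `U` in `C_n(1, …, r)` has at least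
`2 ∑_{k=1}^r exitCount U k` edges, and it suffices to show that this sum exceeds `r` when
`2 ≤ |U| ≤ n - 2`.

If some `exitCount U k` vanishes, `U` is invariant under translation by `k`. Window sums of length
`k` of a `k`-periodic function on `ZMod n` are then constant, and averaging them gives
`∑_{t<k} exitCount U t ≥ max(|U|, n - |U|) > r`. Otherwise all terms are positive and one of
`exitCount U 1`, `exitCount U 2` is at least `2`: if `a ∈ U` is the only point with `a + 1 ∉ U`,
then `a - 1 ∈ U` (an isolated `a` would leave another exit point in `U \ {a}`) and likewise
`a + 2 ∉ U` (apply the same to the complement), so `a - 1` and `a` both count for `c = 2`.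

A set of at most `2r` edges whose removal disconnects the graph contains the cut of a component,
which by the bound is a single vertex or the complement of one.
-/

/-- The circulant graph `C_n(1, …, r)` on `ZMod n`: distinct `i` and `j` are adjacent iff
`i − j ≡ ±k (mod n)` for some `1 ≤ k ≤ r`. -/
def circulant (n r : ℕ) : SimpleGraph (ZMod n) :=
  SimpleGraph.fromRel (fun i j => ∃ k : ℕ, 1 ≤ k ∧ k ≤ r ∧ i - j = (k : ZMod n))

/-- `cutSize G U` is the number of edges of `G` with exactly one endpoint in `U`. -/
noncomputable def cutSize {V : Type*} (G : SimpleGraph V) (U : Set V) : ℕ :=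
  Nat.card {e : Sym2 V // e ∈ G.edgeSet ∧ ∃ a b, e = s(a, b) ∧ a ∈ U ∧ b ∉ U}

open Finset

section ExitCount

variable {G : Type*} [AddCommGroup G] [DecidableEq G]

def exitCount (U : Finset G) (c : G) : ℕ := #{i ∈ U | i + c ∉ U}

@[simp]
lemma exitCount_zero (U : Finset G) : exitCount U 0 = 0 := by
  simp [exitCount]

lemma exitCount_compl [Fintype G] (U : Finset G) (c : G) : exitCount Uᶜ c = exitCount U c := by
  set V := U.map (Equiv.subRight c).toEmbedding
  have hV : ∀ i, i ∈ V ↔ i + c ∈ U := fun i => by simp [V]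
  have h1 : {i ∈ U | i + c ∉ U} = U \ V := by ext; simp [hV]
  have h2 : {i ∈ Uᶜ | i + c ∉ Uᶜ} = V \ U := by ext; simp [hV, and_comm]
  rw [exitCount, exitCount, h1, h2, card_sdiff_comm (card_map _)]

lemma exitCount_neg [Fintype G] (U : Finset G) (c : G) : exitCount U (-c) = exitCount U c := by
  rw [← exitCount_compl U c, exitCount, exitCount]
  refine card_nbij' (· + -c) (· + c) ?_ ?_ ?_ ?_ <;> intro i <;> simp <;> tauto

lemma exitCount_eq_zero_iff [Fintype G] {U : Finset G} {c : G} :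
    exitCount U c = 0 ↔ ∀ i, i + c ∈ U ↔ i ∈ U := by
  refine ⟨fun h i => ?_, fun h => by simp [exitCount, h]⟩
  have hU : ∀ i ∈ U, i + c ∈ U := by simpa [exitCount, filter_eq_empty_iff] using h
  have hUc : ∀ i ∉ U, i + c ∉ U := by
    rw [← exitCount_compl] at h
    simpa [exitCount, filter_eq_empty_iff] using h
  exact ⟨not_imp_not.1 (hUc i), hU i⟩

lemma sum_exitCount [Fintype G] (U : Finset G) : ∑ c, exitCount U c = #U * #Uᶜ := by
  have hrow : ∀ i, ∑ c, (if i + c ∉ U then 1 else 0) = #Uᶜ := fun i => by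
    refine (Equiv.sum_comp (Equiv.addLeft i) (fun c => if c ∉ U then 1 else 0)).trans ?_
    rw [← card_filter]
    congr 1
    ext
    simp
  simp only [exitCount, card_filter]
  rw [sum_comm, sum_congr rfl fun i _ => hrow i, sum_const, smul_eq_mul]

lemma sum_exitCount_le_cutSize [Fintype G] (Γ : SimpleGraph G) {C : Finset G}
    (hC : ∀ c ∈ C, ∀ i, Γ.Adj i (i + c)) (U : Finset G) :
    ∑ c ∈ C, exitCount U c ≤ cutSize Γ U := by
  simp only [exitCount]
  rw [← card_sigma, ← Set.ncard_coe_finset, cutSize]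
  refine (Set.ncard_le_ncard_of_injOn (fun p => s(p.2, p.2 + p.1)) ?_ ?_
    (Set.toFinite _)).trans_eq (Nat.card_coe_set_eq _).symm
  · rintro ⟨c, i⟩ h
    simp only [coe_sigma, Set.mem_sigma_iff, mem_coe, mem_filter] at h
    exact ⟨hC c h.1 i, i, i + c, rfl, h.2.1, h.2.2⟩
  · rintro ⟨c, i⟩ h ⟨c', j⟩ h' hij
    simp only [coe_sigma, Set.mem_sigma_iff, mem_coe, mem_filter] at h h' hij
    rcases Sym2.eq_iff.1 hij with ⟨rfl, hc⟩ | ⟨rfl, -⟩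
    · rw [add_left_cancel hc]
    · exact absurd h.2.1 h'.2.2

end ExitCount

namespace ZMod

lemma natCast_ne_zero_of_pos_of_lt {n a : ℕ} (h0 : 0 < a) (hn : a < n) : (a : ZMod n) ≠ 0 := by
  rw [Ne, ZMod.natCast_eq_zero_iff]
  exact Nat.not_dvd_of_pos_of_lt h0 hn

theorem nsmul_sum_range_add_of_periodic {n : ℕ} [NeZero n] {M : Type*} [AddCancelCommMonoid M]
    {f : ZMod n → M} {k : ℕ} (hf : Function.Periodic f k) (c : ZMod n) :
    n • ∑ t ∈ range k, f (c + t) = k • ∑ x, f x := by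
  set W : ZMod n → M := fun c => ∑ t ∈ range k, f (c + t)
  have hstep : ∀ c, W (c + 1) = W c := fun c => by
    refine add_right_cancel (b := f c) ?_
    calc W (c + 1) + f c = ∑ t ∈ range (k + 1), f (c + t) := by
          simp [W, sum_range_succ', add_assoc, add_comm (1 : ZMod n)]
      _ = W c + f c := by rw [sum_range_succ, hf c]
  have hconst : ∀ c, W c = W 0 := fun c => by
    rw [← natCast_zmod_val c]
    induction c.val with
    | zero => simp
    | succ m ih => rw [Nat.cast_succ, hstep, ih]
  calc n • W c = ∑ x, W x := by simp [hconst]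
    _ = ∑ t ∈ range k, ∑ x, f (x + t) := sum_comm
    _ = ∑ t ∈ range k, ∑ x, f x :=
      sum_congr rfl fun t _ => Equiv.sum_comp (Equiv.addRight (t : ZMod n)) f
    _ = k • ∑ x, f x := by rw [sum_const, card_range]

end ZMod

section Cyclic

variable {n : ℕ} [NeZero n]

lemma card_le_sum_range_exitCount {U : Finset (ZMod n)} {k : ℕ} (hk : 0 < k)
    (hU : ∀ i, i + (k : ZMod n) ∈ U ↔ i ∈ U) (hUc : Uᶜ.Nonempty) :
    #U ≤ ∑ t ∈ range k, exitCount U t := by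
  have hexit : Function.Periodic (exitCount U) k := fun x => by
    simp only [exitCount, ← add_assoc, hU]
  have hind : Function.Periodic (fun x => if x ∈ Uᶜ then 1 else 0 : ZMod n → ℕ) k := fun x => by
    simp [hU]
  obtain ⟨v, hv⟩ := hUc
  have hcard : n ≤ k * #Uᶜ := by
    have hwindow := ZMod.nsmul_sum_range_add_of_periodic hind v
    have hv0 : 1 ≤ ∑ t ∈ range k, (if v + t ∈ Uᶜ then 1 else 0) := by
      rw [← Nat.succ_pred_eq_of_pos hk, sum_range_succ']
      simp [mem_compl.1 hv]
    simp only [sum_boole, smul_eq_mul, Nat.cast_id, filter_mem_eq_inter, univ_inter]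
      at hwindow hv0
    calc n ≤ n * #{t ∈ range k | v + ((t : ℕ) : ZMod n) ∈ Uᶜ} := Nat.le_mul_of_pos_right n hv0
      _ = k * #Uᶜ := hwindow
  have hsum := ZMod.nsmul_sum_range_add_of_periodic hexit 0
  simp only [zero_add, sum_exitCount, smul_eq_mul] at hsum
  refine Nat.le_of_mul_le_mul_left ?_ (NeZero.pos n)
  calc n * #U ≤ k * #Uᶜ * #U := Nat.mul_le_mul_right _ hcard
    _ = n * ∑ t ∈ range k, exitCount U t := by rw [hsum]; ring

lemma exitCount_one_pos {W : Finset (ZMod n)} (hW : W.Nonempty) (hWc : Wᶜ.Nonempty) :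
    0 < exitCount W 1 := by
  refine Nat.pos_of_ne_zero fun h => ?_
  have hper : ∀ i, i + ((1 : ℕ) : ZMod n) ∈ W ↔ i ∈ W := by
    simpa using exitCount_eq_zero_iff.1 h
  have := card_le_sum_range_exitCount one_pos hper hWc
  simp only [range_one, sum_singleton, Nat.cast_zero, exitCount_zero, nonpos_iff_eq_zero,
    card_eq_zero] at this
  exact hW.ne_empty this

lemma two_le_exitCount_one_of_isolated {V : Finset (ZMod n)} {b : ZMod n} (hb : b ∈ V)
    (hb_succ : b + 1 ∉ V) (hb_pred : b - 1 ∉ V) (hV : 2 ≤ #V) : 2 ≤ exitCount V 1 := by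
  obtain ⟨i, hi⟩ := card_pos.1 <| exitCount_one_pos (W := V.erase b)
    (card_pos.1 (by rw [card_erase_of_mem hb]; omega)) ⟨b, by simp⟩
  simp only [mem_filter, mem_erase, not_and] at hi
  have hi_succ : i + 1 ∉ V := fun h => by
    have hib : i + 1 = b := by
      by_contra h'
      exact hi.2 h' h
    exact hb_pred (by rw [← hib, add_sub_cancel_right]; exact hi.1.2)
  calc 2 = #{i, b} := (card_pair hi.1.1).symm
    _ ≤ exitCount V 1 := card_le_card <| insert_subset_iff.2
      ⟨mem_filter.2 ⟨hi.1.2, hi_succ⟩, singleton_subset_iff.2 (mem_filter.2 ⟨hb, hb_succ⟩)⟩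

lemma two_le_exitCount_one_or_two {U : Finset (ZMod n)} (hU : 2 ≤ #U) (hUc : 2 ≤ #Uᶜ) :
    2 ≤ exitCount U 1 ∨ 2 ≤ exitCount U 2 := by
  by_contra! h
  obtain ⟨a, ha⟩ := card_pos.1 <| exitCount_one_pos (W := U)
    (card_pos.1 (by omega)) (card_pos.1 (by omega))
  simp only [mem_filter] at ha
  have ha_pred : a - 1 ∈ U := by
    by_contra h'
    exact (two_le_exitCount_one_of_isolated ha.1 ha.2 h' hU).not_gt h.1
  have ha_succ : a + 2 ∉ U := by
    intro h'
    have := two_le_exitCount_one_of_isolated (V := Uᶜ) (b := a + 1) (by simpa using ha.2)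
      (by rw [add_assoc, one_add_one_eq_two]; simpa using h') (by simpa using ha.1) hUc
    rw [exitCount_compl] at this
    omega
  have hne : a - 1 ≠ a := fun h' => ha.2 (by rw [← h', sub_add_cancel]; exact ha.1)
  have ha_pred_succ : a - 1 + 2 ∉ U := by rw [show a - 1 + 2 = a + 1 by ring]; exact ha.2
  have : 2 ≤ exitCount U 2 :=
    calc 2 = #{a - 1, a} := (card_pair hne).symm
      _ ≤ exitCount U 2 := card_le_card <| insert_subset_iff.2
        ⟨mem_filter.2 ⟨ha_pred, ha_pred_succ⟩,
          singleton_subset_iff.2 (mem_filter.2 ⟨ha.1, ha_succ⟩)⟩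
  omega

end Cyclic

section Circulant

variable {n r : ℕ}

def circulantShifts (n r : ℕ) : Finset (ZMod n) :=
  (Icc 1 r).image (fun k : ℕ => (k : ZMod n)) ∪ (Icc 1 r).image (fun k : ℕ => -(k : ZMod n))

lemma natCast_injOn_Icc (h : r < n) : Set.InjOn (fun k : ℕ => (k : ZMod n)) (Icc 1 r) := by
  intro a ha b hb hab
  simp only [coe_Icc, Set.mem_Icc] at ha hb
  simpa [ZMod.natCast_eq_natCast_iff', Nat.mod_eq_of_lt (ha.2.trans_lt h),
    Nat.mod_eq_of_lt (hb.2.trans_lt h)] using hab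

lemma negNatCast_injOn_Icc (h : r < n) : Set.InjOn (fun k : ℕ => -(k : ZMod n)) (Icc 1 r) :=
  neg_injective.comp_injOn (natCast_injOn_Icc h)

lemma disjoint_image_natCast_image_neg_natCast (h : 2 * r < n) :
    Disjoint ((Icc 1 r).image (fun k : ℕ => (k : ZMod n)))
      ((Icc 1 r).image (fun k : ℕ => -(k : ZMod n))) := by
  simp only [disjoint_left, mem_image, mem_Icc, not_exists, not_and]
  rintro _ ⟨a, ha, rfl⟩ b hb hab
  refine ZMod.natCast_ne_zero_of_pos_of_lt (n := n) (a := b + a) (by omega) (by omega) ?_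
  rw [Nat.cast_add, ← hab, add_neg_cancel]

lemma card_circulantShifts (h : 2 * r < n) : #(circulantShifts n r) = 2 * r := by
  rw [circulantShifts, card_union_of_disjoint (disjoint_image_natCast_image_neg_natCast h),
    card_image_of_injOn (natCast_injOn_Icc (by omega)),
    card_image_of_injOn (negNatCast_injOn_Icc (by omega)), Nat.card_Icc]
  omega

lemma sum_exitCount_circulantShifts [NeZero n] (h : 2 * r < n) (U : Finset (ZMod n)) :
    ∑ c ∈ circulantShifts n r, exitCount U c = 2 * ∑ k ∈ Icc 1 r, exitCount U k := by
  rw [circulantShifts, sum_union (disjoint_image_natCast_image_neg_natCast h),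
    sum_image (natCast_injOn_Icc (by omega)),
    sum_image (negNatCast_injOn_Icc (by omega))]
  simp only [exitCount_neg, two_mul]

lemma zero_notMem_circulantShifts (h : r < n) : (0 : ZMod n) ∉ circulantShifts n r := by
  simp only [circulantShifts, mem_union, mem_image, mem_Icc, neg_eq_zero, or_self, not_exists,
    not_and]
  exact fun k hk => ZMod.natCast_ne_zero_of_pos_of_lt (by omega) (by omega)

lemma circulant_adj_iff (h : r < n) {i j : ZMod n} :
    (circulant n r).Adj i j ↔ j - i ∈ circulantShifts n r := by
  have hne : j - i ∈ circulantShifts n r → i ≠ j := fun hs hij =>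
    zero_notMem_circulantShifts h (by rwa [hij, sub_self] at hs)
  simp only [circulant, SimpleGraph.fromRel_adj, circulantShifts, mem_union, mem_image,
    mem_Icc] at hne ⊢
  refine ⟨fun ⟨_, hk⟩ => ?_, fun hk => ⟨hne hk, ?_⟩⟩
  · rcases hk with ⟨k, hk1, hkr, hk⟩ | ⟨k, hk1, hkr, hk⟩
    · exact Or.inr ⟨k, ⟨hk1, hkr⟩, by rw [← hk, neg_sub]⟩
    · exact Or.inl ⟨k, ⟨hk1, hkr⟩, hk.symm⟩
  · rcases hk with ⟨k, hk, hk'⟩ | ⟨k, hk, hk'⟩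
    · exact Or.inr ⟨k, hk.1, hk.2, hk'.symm⟩
    · exact Or.inl ⟨k, hk.1, hk.2, by rw [← neg_sub, ← hk', neg_neg]⟩

lemma ncard_incidenceSet_circulant (h : 2 * r < n) (v : ZMod n) :
    ((circulant n r).incidenceSet v).ncard = 2 * r := by
  classical
  have : NeZero n := ⟨by omega⟩
  have hnbr : (circulant n r).neighborFinset v = (circulantShifts n r).image (v + ·) := by
    ext w
    simp only [SimpleGraph.mem_neighborFinset, circulant_adj_iff (by omega : r < n), mem_image]
    exact ⟨fun hw => ⟨w - v, hw, add_sub_cancel v w⟩, by rintro ⟨c, hc, rfl⟩; simpa⟩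
  rw [← SimpleGraph.coe_incidenceFinset, Set.ncard_coe_finset,
    SimpleGraph.card_incidenceFinset_eq_degree, ← SimpleGraph.card_neighborFinset_eq_degree, hnbr,
    card_image_of_injective _ (add_right_injective v), card_circulantShifts h]

lemma succ_le_sum_exitCount [NeZero n] (hr : 2 ≤ r) (hn : 2 * r + 1 < n) {U : Finset (ZMod n)}
    (hU : 2 ≤ #U) (hUc : 2 ≤ #Uᶜ) : r + 1 ≤ ∑ k ∈ Icc 1 r, exitCount U k := by
  by_cases hzero : ∃ k ∈ Icc 1 r, exitCount U k = 0
  · obtain ⟨k, hk, hk0⟩ := hzero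
    rw [mem_Icc] at hk
    have hper := exitCount_eq_zero_iff.1 hk0
    have hle := card_le_sum_range_exitCount hk.1 hper (card_pos.1 (by omega))
    have hle' := card_le_sum_range_exitCount (U := Uᶜ) hk.1
      (fun i => by simpa using not_congr (hper i)) (by simpa using card_pos.1 (by omega))
    simp only [exitCount_compl] at hle'
    have hrange : range (r + 1) = insert 0 (Icc 1 r) := by ext; simp; omega
    have hwindow : ∑ t ∈ range k, exitCount U t ≤ ∑ k ∈ Icc 1 r, exitCount U k :=
      calc ∑ t ∈ range k, exitCount U t ≤ ∑ t ∈ range (r + 1), exitCount U t :=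
            sum_le_sum_of_subset (range_subset_range.2 (by omega))
        _ = ∑ k ∈ Icc 1 r, exitCount U k := by simp [hrange]
    have hcard : #U + #Uᶜ = n := by rw [card_add_card_compl, ZMod.card]
    omega
  · push Not at hzero
    obtain ⟨j, hj, hj2⟩ : ∃ j ∈ Icc 1 r, 2 ≤ exitCount U j := by
      rcases two_le_exitCount_one_or_two hU hUc with h | h
      · exact ⟨1, by simp; omega, by simpa using h⟩
      · exact ⟨2, by simp; omega, by simpa using h⟩
    calc r + 1 = ∑ _k ∈ Icc 1 r, 1 + 1 := by simp
      _ ≤ ∑ k ∈ Icc 1 r, exitCount U k :=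
        sum_lt_sum (fun k hk => Nat.one_le_iff_ne_zero.2 (hzero k hk)) ⟨j, hj, hj2⟩

lemma two_mul_lt_cutSize_circulant (hr : 2 ≤ r) (hn : 2 * r + 1 < n) {U : Finset (ZMod n)}
    (hU : 2 ≤ #U) (hU' : #U ≤ n - 2) : 2 * r < cutSize (circulant n r) U := by
  have : NeZero n := ⟨by omega⟩
  have hUc : 2 ≤ #Uᶜ := by rw [card_compl, ZMod.card]; omega
  calc 2 * r < 2 * ∑ k ∈ Icc 1 r, exitCount U k := by
        have := succ_le_sum_exitCount hr hn hU hUc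
        omega
    _ = ∑ c ∈ circulantShifts n r, exitCount U c :=
      (sum_exitCount_circulantShifts (by omega) U).symm
    _ ≤ cutSize (circulant n r) U :=
      sum_exitCount_le_cutSize _ (fun c hc i => (circulant_adj_iff (by omega)).2 (by simpa)) U

end Circulant

section Cut

variable {V : Type*} {G : SimpleGraph V}

lemma cutSize_le_card {U : Set V} {D : Finset (Sym2 V)}
    (hD : ∀ a ∈ U, ∀ b ∉ U, G.Adj a b → s(a, b) ∈ D) : cutSize G U ≤ #D := by
  rw [cutSize, ← Set.ncard_coe_finset]
  refine (Nat.card_coe_set_eq _).trans_le (Set.ncard_le_ncard ?_ D.finite_toSet)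
  rintro _ ⟨he, a, b, rfl, ha, hb⟩
  exact hD a ha b hb he

lemma exists_crossing_subset_of_not_preconnected [Fintype V] [DecidableEq V]
    {D : Set (Sym2 V)} (h : ¬ (G.deleteEdges D).Preconnected) :
    ∃ U : Finset V, U.Nonempty ∧ Uᶜ.Nonempty ∧ ∀ a ∈ U, ∀ b ∉ U, G.Adj a b → s(a, b) ∈ D := by
  classical
  obtain ⟨a, b, hab⟩ : ∃ a b, ¬ (G.deleteEdges D).Reachable a b := by
    simpa [SimpleGraph.Preconnected] using h
  refine ⟨({x | (G.deleteEdges D).Reachable a x} : Finset V), ⟨a, by simp⟩, ⟨b, by simpa⟩,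
    fun x hx y hy hxy => ?_⟩
  by_contra hD
  simp only [mem_filter, mem_univ, true_and] at hx hy
  exact hy (hx.trans ((SimpleGraph.deleteEdges_adj ..).2 ⟨hxy, hD⟩).reachable)

lemma incidenceSet_subset_of_crossing_subset [Fintype V] [DecidableEq V] {U : Finset V}
    {D : Set (Sym2 V)} (hD : ∀ a ∈ U, ∀ b ∉ U, G.Adj a b → s(a, b) ∈ D) {v : V}
    (hv : U = {v} ∨ Uᶜ = {v}) : G.incidenceSet v ⊆ D := by
  rintro e ⟨he, hve⟩
  obtain ⟨w, rfl⟩ := Sym2.mem_iff_exists.1 hve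
  have hvw : G.Adj v w := he
  rcases hv with rfl | hUc
  · exact hD v (mem_singleton_self v) w (by simpa using hvw.ne') hvw
  · have hU : ∀ x, x ∉ U ↔ x = v := fun x => by rw [← mem_compl, hUc, mem_singleton]
    rw [Sym2.eq_swap]
    exact hD w (not_not.1 (mt (hU w).1 hvw.ne')) v ((hU v).2 rfl) hvw.symm

end Cut

theorem circulant_edge_connectivity_general (n r : ℕ) (hr : 2 ≤ r)
    (h2 : 4 * r < n) :
    (∀ D : Finset (Sym2 (ZMod n)), ↑D ⊆ (circulant n r).edgeSet → D.card ≤ 2 * r →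
      ¬ ((circulant n r).deleteEdges ↑D).Preconnected →
      ∃ v : ZMod n, ↑D = (circulant n r).incidenceSet v) ∧
    ∀ U : Finset (ZMod n), 2 ≤ U.card → U.card ≤ n - 2 →
      2 * r < cutSize (circulant n r) ↑U := by
  have hcut : ∀ U : Finset (ZMod n), 2 ≤ #U → #U ≤ n - 2 → 2 * r < cutSize (circulant n r) U :=
    fun U hU hU' => two_mul_lt_cutSize_circulant hr (by omega) hU hU'
  refine ⟨fun D _ hD hdisc => ?_, hcut⟩
  have : NeZero n := ⟨by omega⟩
  obtain ⟨U, hU, hUc, hcross⟩ := exists_crossing_subset_of_not_preconnected hdisc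
  have hsingle : #U = 1 ∨ #Uᶜ = 1 := by
    have hsmall : ¬ (2 ≤ #U ∧ #U ≤ n - 2) := fun h =>
      (hcut U h.1 h.2).not_ge ((cutSize_le_card hcross).trans hD)
    have hcompl : #Uᶜ = n - #U := by rw [card_compl, ZMod.card]
    have := card_pos.2 hU
    have := card_pos.2 hUc
    omega
  obtain ⟨v, hv⟩ : ∃ v, U = {v} ∨ Uᶜ = {v} := by
    rcases hsingle with h | h
    · exact (card_eq_one.1 h).imp fun _ => Or.inl
    · exact (card_eq_one.1 h).imp fun _ => Or.inr
  refine ⟨v, (Set.eq_of_subset_of_ncard_le (incidenceSet_subset_of_crossing_subset hcross hv)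
    ?_ D.finite_toSet).symm⟩
  rw [Set.ncard_coe_finset, ncard_incidenceSet_circulant (by omega)]
  exact hD

/-- For `r ≥ 2` and `n/2 < 4r < n`, if deleting a set `D` of at most
`2r` edges of the circulant graph `C_n(1, …, r)` disconnects it, then `D` is exactly the
incidence set of a single vertex. In particular every cut with `2 ≤ |U| ≤ n − 2` has size
strictly greater than `2r`. -/
theorem circulant_edge_connectivity (n r : ℕ) (hr : 2 ≤ r)
    (h1 : n < 8 * r) (h2 : 4 * r < n) :
    (∀ D : Finset (Sym2 (ZMod n)), ↑D ⊆ (circulant n r).edgeSet → D.card ≤ 2 * r →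
      ¬ ((circulant n r).deleteEdges ↑D).Preconnected →
      ∃ v : ZMod n, ↑D = (circulant n r).incidenceSet v) ∧
    ∀ U : Finset (ZMod n), 2 ≤ U.card → U.card ≤ n - 2 →
      2 * r < cutSize (circulant n r) ↑U :=
  circulant_edge_connectivity_general n r hr h2
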